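/- Let φ : Z → ℝ be differentiable on Z = ℝ^m × ℝ^n × S^n_{++}, with Riemannian metric at z = (x,μ,Σ) given by ⟨(w₁,v₁,V₁),(w₂,v₂,V₂)⟩_z = ⟨w₁,w₂⟩ + ⟨v₁,v₂⟩ + tr(L_Σ[V₁] Σ L_Σ[V₂]). Then the Riemannian gradient of φ at z equals (∇_x φ(z), ∇_μ φ(z), 2[∇_Σ φ(z)]Σ + 2Σ[∇_Σ φ(z)]), where ∇ denotes the Euclidean gradient. That is, this triple G satisfies ⟨G, (w,v,V)⟩_z = Dφ_z(w,v,V) for all tangent vectors (w,v,V). -/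
import Mathlib


open scoped RealInnerProductSpace

/-- Riemannian gradient on the feature-Gaussian manifold `Z = ℝ^m × ℝ^n × S^n_{++}`.
Let `φ : Z → ℝ` be differentiable at `z = (x, μ, S)`, with Euclidean gradients
`gx, gμ, gS` (so every directional derivative is `⟨gx,w⟩ + ⟨gμ,v⟩ + tr(gS.transpose V)`,
and `gS` is symmetric).  Then the triple
`G = (gx, gμ, 2 gS S + 2 S gS)` is the Riemannian gradient: the third component of `G`
has Lyapunov solution `L_S[G₃] = 2 gS`, and for every tangent vector `(w, v, V)` with
`V` symmetric and `HV = L_S[V]`, the Riemannian inner product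
`⟨G, (w,v,V)⟩_z = ⟨gx,w⟩ + ⟨gμ,v⟩ + tr(L_S[G₃] · S · L_S[V])` equals the directional
derivative `Dφ_z(w,v,V)`. -/
theorem riemannian_gradient_formula {m n : ℕ}
    (φ : (EuclideanSpace ℝ (Fin m)) × (EuclideanSpace ℝ (Fin n)) ×
      Matrix (Fin n) (Fin n) ℝ → ℝ)
    (x : EuclideanSpace ℝ (Fin m)) (μ : EuclideanSpace ℝ (Fin n))
    (S : Matrix (Fin n) (Fin n) ℝ) (hS : S.PosDef)
    (gx : EuclideanSpace ℝ (Fin m)) (gμ : EuclideanSpace ℝ (Fin n))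
    (gS : Matrix (Fin n) (Fin n) ℝ) (hgS : gS.IsSymm)
    (hgrad : ∀ (w : EuclideanSpace ℝ (Fin m)) (v : EuclideanSpace ℝ (Fin n))
      (V : Matrix (Fin n) (Fin n) ℝ),
      HasDerivAt (fun t : ℝ => φ (x + t • w, μ + t • v, S + t • V))
        (⟪gx, w⟫ + ⟪gμ, v⟫ + Matrix.trace (gS.transpose * V)) 0) :
    -- `2 gS` is the symmetric Lyapunov solution for `G₃ = 2 gS S + 2 S gS`
    (((2 : ℝ) • gS).IsSymm ∧
      (2 : ℝ) • gS * S + S * ((2 : ℝ) • gS) = 2 • (gS * S) + 2 • (S * gS)) ∧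
    -- pairing of `G` with any tangent vector in the Riemannian metric gives `Dφ_z`
    ∀ (w : EuclideanSpace ℝ (Fin m)) (v : EuclideanSpace ℝ (Fin n))
      (V HV : Matrix (Fin n) (Fin n) ℝ), V.IsSymm → HV.IsSymm →
      HV * S + S * HV = V →
      HasDerivAt (fun t : ℝ => φ (x + t • w, μ + t • v, S + t • V))
        (⟪gx, w⟫ + ⟪gμ, v⟫ + Matrix.trace (((2 : ℝ) • gS) * S * HV)) 0 := by
  have hSsymm : S.IsSymm := by
    have h := hS.isHermitian
    rwa [Matrix.IsHermitian, Matrix.conjTranspose_eq_transpose_of_trivial] at h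
  refine ⟨⟨?_, ?_⟩, ?_⟩
  · unfold Matrix.IsSymm
    rw [Matrix.transpose_smul, hgS]
  · simp [smul_mul_assoc, mul_smul_comm, two_smul]; noncomm_ring
  · intro w v V HV hV hHV hLyap
    have e1 : Matrix.trace (gS * (HV * S)) = Matrix.trace (gS * (S * HV)) := by
      calc Matrix.trace (gS * (HV * S)) = Matrix.trace ((gS * HV) * S) := by rw [mul_assoc]
        _ = Matrix.trace (S * (gS * HV)) := Matrix.trace_mul_comm _ _
        _ = Matrix.trace ((S * (gS * HV)).transpose) := (Matrix.trace_transpose _).symm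
        _ = Matrix.trace ((gS * HV).transpose * S.transpose) := by rw [Matrix.transpose_mul]
        _ = Matrix.trace ((HV.transpose * gS.transpose) * S) := by
              rw [Matrix.transpose_mul, hSsymm]
        _ = Matrix.trace ((HV * gS) * S) := by rw [hgS, hHV]
        _ = Matrix.trace (HV * (gS * S)) := by rw [mul_assoc]
        _ = Matrix.trace ((gS * S) * HV) := Matrix.trace_mul_comm _ _
        _ = Matrix.trace (gS * (S * HV)) := by rw [mul_assoc]
    have key : Matrix.trace (((2 : ℝ) • gS) * S * HV) = Matrix.trace (gS.transpose * V) := by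
      rw [hgS, ← hLyap, smul_mul_assoc, smul_mul_assoc, Matrix.trace_smul, mul_add,
        Matrix.trace_add, e1, mul_assoc]
      rw [smul_eq_mul]; ring
    rw [key]
    exact hgrad w v V
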